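/- Every weakly reversible reaction network with exactly one linkage class is strongly endotactic. -/
import Mathlib


open Finset

/-- A reaction network with species set `Fin n`: a finite set of complexes in `ℝ^n`
and a finite set of reactions between complexes. -/
structure ReactionNetwork (n : ℕ) where
  complexes : Finset (Fin n → ℝ)
  reactions : Finset ((Fin n → ℝ) × (Fin n → ℝ))
  source_mem : ∀ r ∈ reactions, r.1 ∈ complexes
  target_mem : ∀ r ∈ reactions, r.2 ∈ complexes

/-- The standard dot product on `Fin n → ℝ`. -/
def dotp {n : ℕ} (w x : Fin n → ℝ) : ℝ := ∑ i, w i * x i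

/-- The edge relation of the reaction graph. -/
def ReactionNetwork.step {n : ℕ} (G : ReactionNetwork n) (y y' : Fin n → ℝ) : Prop :=
  (y, y') ∈ G.reactions

/-- Two complexes are linked if they lie in the same linkage class (connected
component of the reaction graph): the equivalence closure of the edge relation. -/
def ReactionNetwork.linked {n : ℕ} (G : ReactionNetwork n) : (Fin n → ℝ) → (Fin n → ℝ) → Prop :=
  Relation.EqvGen G.step

/-- Weak reversibility: every linkage class is strongly connected; equivalently,
for every reaction there is a directed path back from product to reactant. -/
def ReactionNetwork.WeaklyReversible {n : ℕ} (G : ReactionNetwork n) : Prop :=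
  ∀ r ∈ G.reactions, Relation.ReflTransGen G.step r.2 r.1

/-- `w` is orthogonal to the stoichiometric subspace (the span of reaction vectors). -/
def ReactionNetwork.OrthToStoich {n : ℕ} (G : ReactionNetwork n) (w : Fin n → ℝ) : Prop :=
  ∀ r ∈ G.reactions, dotp w (r.2 - r.1) = 0

/-- Endotactic: for every `w`, every `w`-essential reaction whose reactant is
`⟨w,·⟩`-maximal among reactants of `w`-essential reactions satisfies
`⟨w, y' − y⟩ < 0`. -/
def ReactionNetwork.Endotactic {n : ℕ} (G : ReactionNetwork n) : Prop :=
  ∀ w : Fin n → ℝ, ∀ r ∈ G.reactions, dotp w (r.2 - r.1) ≠ 0 →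
    (∀ r' ∈ G.reactions, dotp w (r'.2 - r'.1) ≠ 0 → dotp w r'.1 ≤ dotp w r.1) →
    dotp w (r.2 - r.1) < 0

/-- Strongly endotactic: endotactic, and for every `w` not orthogonal to the
stoichiometric subspace there is a reaction `(y, y')` with `⟨w, y' − y⟩ < 0` whose
reactant `y` is `⟨w,·⟩`-maximal among all reactants. -/
def ReactionNetwork.StronglyEndotactic {n : ℕ} (G : ReactionNetwork n) : Prop :=
  G.Endotactic ∧
  ∀ w : Fin n → ℝ, ¬ G.OrthToStoich w →
    ∃ r ∈ G.reactions, dotp w (r.2 - r.1) < 0 ∧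
      ∀ r' ∈ G.reactions, dotp w r'.1 ≤ dotp w r.1


lemma dotp_sub {n : ℕ} (w a b : Fin n → ℝ) : dotp w (a - b) = dotp w a - dotp w b := by
  simp [dotp, mul_sub, Finset.sum_sub_distrib]

/-- Along a directed path whose endpoint value drops, some reaction strictly
decreases the value, with reactant value at least that of the starting point. -/
lemma key_descent {n : ℕ} (G : ReactionNetwork n) (w : Fin n → ℝ) {x z : Fin n → ℝ}
    (h : Relation.ReflTransGen G.step x z) :
    dotp w z < dotp w x →
    ∃ s ∈ G.reactions, dotp w s.2 < dotp w s.1 ∧ dotp w x ≤ dotp w s.1 := by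
  induction h using Relation.ReflTransGen.head_induction_on with
  | refl => exact fun h => absurd h (lt_irrefl _)
  | head hstep _ ih =>
    rename_i a c _
    intro hlt
    by_cases hc : dotp w c < dotp w a
    · exact ⟨(a, c), hstep, hc, le_refl _⟩
    · obtain ⟨s, hs, h1, h2⟩ := ih (lt_of_lt_of_le hlt (not_lt.1 hc))
      exact ⟨s, hs, h1, le_trans (not_lt.1 hc) h2⟩

lemma path_rev {n : ℕ} (G : ReactionNetwork n) (hwr : G.WeaklyReversible) {x z : Fin n → ℝ}
    (h : Relation.ReflTransGen G.step x z) : Relation.ReflTransGen G.step z x := by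
  induction h with
  | refl => exact .refl
  | tail _ hstep ih => exact .trans (hwr _ hstep) ih

lemma linked_path {n : ℕ} (G : ReactionNetwork n) (hwr : G.WeaklyReversible) {x z : Fin n → ℝ}
    (h : G.linked x z) : Relation.ReflTransGen G.step x z := by
  induction h with
  | rel _ _ h => exact .single h
  | refl => exact .refl
  | symm _ _ _ ih => exact path_rev G hwr ih
  | trans _ _ _ _ _ ih1 ih2 => exact .trans ih1 ih2

/-- every weakly reversible reaction network with exactly one linkage
class is strongly endotactic. -/
theorem weakly_reversible_one_linkage_class_strongly_endotactic {n : ℕ}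
    (G : ReactionNetwork n) (hwr : G.WeaklyReversible)
    (hne : G.complexes.Nonempty)
    (hone : ∀ y ∈ G.complexes, ∀ z ∈ G.complexes, G.linked y z) :
    G.StronglyEndotactic := by
  constructor
  · intro w r hr hne' hmax
    rcases lt_or_gt_of_ne hne' with h | h
    · exact h
    exfalso
    rw [dotp_sub] at h
    obtain ⟨s, hs, h1, h2⟩ := key_descent G w (hwr r hr) (by linarith)
    have hle := hmax s hs (by rw [dotp_sub]; linarith)
    linarith
  · intro w hw
    simp only [ReactionNetwork.OrthToStoich, not_forall] at hw
    obtain ⟨r0, hr0, hr0ne⟩ := hw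
    obtain ⟨y, hy, hymax⟩ := G.complexes.exists_max_image (dotp w) hne
    rw [dotp_sub] at hr0ne
    have hpath1 : Relation.ReflTransGen G.step y r0.1 :=
      linked_path G hwr (hone y hy r0.1 (G.source_mem r0 hr0))
    have h1le : dotp w r0.1 ≤ dotp w y := hymax r0.1 (G.source_mem r0 hr0)
    have h2le : dotp w r0.2 ≤ dotp w y := hymax r0.2 (G.target_mem r0 hr0)
    have hkey : ∃ s ∈ G.reactions, dotp w s.2 < dotp w s.1 ∧ dotp w y ≤ dotp w s.1 := by
      rcases lt_or_gt_of_ne hr0ne with h | h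
      · -- dotp w r0.2 < dotp w r0.1
        exact key_descent G w (hpath1.tail hr0) (by linarith)
      · exact key_descent G w hpath1 (by linarith)
    obtain ⟨s, hs, h1, h2⟩ := hkey
    refine ⟨s, hs, by rw [dotp_sub]; linarith, fun r' hr' => ?_⟩
    exact le_trans (hymax r'.1 (G.source_mem r' hr')) h2
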